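/- arXiv:1908.03739 — 6 statements merged into one kernel-verified Lean document; each statement's English description precedes it below -/
import Mathlib

section
/- Each of the n sets of n consecutive integers containing 0, namely {−(n−1),...,0}, {−(n−2),...,1}, ..., {0,1,...,n−1}, is the sum-characteristic of exactly (n−1)! permutations of {1,...,n}. -/
lemma perm_range_int (n : ℕ) (σ : Equiv.Perm (Fin n)) :
    Set.range (fun i : Fin n => (σ i : ℤ)) = Set.Icc 0 ((n : ℤ) - 1) := by
  ext x
  constructor
  · rintro ⟨i, rfl⟩
    have := (σ i).isLt
    simp only [Set.mem_Icc]
    omega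
  · rintro ⟨h0, h1⟩
    have hx : x.toNat < n := by omega
    refine ⟨σ.symm ⟨x.toNat, hx⟩, ?_⟩
    simp [Equiv.apply_symm_apply]
    omega

lemma card_perm_eval_eq (m : ℕ) (y : Fin (m + 1)) :
    Set.ncard {σ : Equiv.Perm (Fin (m + 1)) | σ 0 = y} = Nat.factorial m := by
  have e : {σ : Equiv.Perm (Fin (m + 1)) // σ 0 = y} ≃ Equiv.Perm (Fin m) :=
    { toFun := fun σ => (Equiv.Perm.decomposeFin σ.1).2
      invFun := fun τ => ⟨Equiv.Perm.decomposeFin.symm (y, τ),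
        Equiv.Perm.decomposeFin_symm_apply_zero y τ⟩
      left_inv := by
        rintro ⟨σ, hσ⟩
        have h1 : (Equiv.Perm.decomposeFin σ).1 = y := by
          have h2 : Equiv.Perm.decomposeFin.symm (Equiv.Perm.decomposeFin σ) = σ :=
            Equiv.symm_apply_apply _ _
          have := Equiv.Perm.decomposeFin_symm_apply_zero
            (Equiv.Perm.decomposeFin σ).1 (Equiv.Perm.decomposeFin σ).2
          rw [← hσ, ← h2]
          simpa using this.symm
        ext i
        simp only
        rw [← h1]
        simp [Equiv.symm_apply_apply]
      right_inv := by
        intro τ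
        simp }
  rw [← Nat.card_coe_set_eq]
  have : Nat.card {σ : Equiv.Perm (Fin (m + 1)) | σ 0 = y} = Nat.card (Equiv.Perm (Fin m)) :=
    Nat.card_congr e
  rw [this, Nat.card_eq_fintype_card, Fintype.card_perm, Fintype.card_fin]

/-- Each of the n sets of n consecutive integers containing 0 is the sum-characteristic
of exactly (n-1)! permutations of {1,...,n}. -/
theorem sum_characteristic_count (n : ℕ) (hn : 1 ≤ n) (s : ℕ) (hs : s ≤ n - 1) :
    Set.ncard {σ : Equiv.Perm (Fin n) |
        Set.range (fun i : Fin n => ((σ i : ℤ) - (σ ⟨0, hn⟩ : ℤ))) =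
          Set.Icc (-(s : ℤ)) ((n : ℤ) - 1 - s)} = Nat.factorial (n - 1) := by
  obtain ⟨m, rfl⟩ : ∃ m, n = m + 1 := ⟨n - 1, by omega⟩
  have hs' : s < m + 1 := by omega
  have key : ∀ σ : Equiv.Perm (Fin (m + 1)),
      (Set.range (fun i : Fin (m + 1) => ((σ i : ℤ) - (σ ⟨0, hn⟩ : ℤ))) =
          Set.Icc (-(s : ℤ)) (((m + 1 : ℕ) : ℤ) - 1 - s)) ↔ σ ⟨0, hn⟩ = ⟨s, hs'⟩ := by
    intro σ
    set c : ℤ := (σ ⟨0, hn⟩ : ℤ) with hc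
    have hr : Set.range (fun i : Fin (m + 1) => ((σ i : ℤ) - c)) =
        Set.Icc (-c) (((m + 1 : ℕ) : ℤ) - 1 - c) := by
      ext x
      constructor
      · rintro ⟨i, rfl⟩
        have := (σ i).isLt
        simp only [Set.mem_Icc]
        omega
      · rintro ⟨h0, h1⟩
        have hx : x + c ∈ Set.range (fun i : Fin (m + 1) => (σ i : ℤ)) := by
          rw [perm_range_int]
          constructor <;> [skip; skip] <;> push_cast <;> omega
        obtain ⟨i, hi⟩ := hx
        exact ⟨i, by simp only at hi ⊢; omega⟩
    rw [hr]
    constructor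
    · intro h
      have h1 : -c ∈ Set.Icc (-(s : ℤ)) (((m + 1 : ℕ) : ℤ) - 1 - s) := by
        rw [← h]
        constructor <;> push_cast <;> omega
      have h2 : -(s : ℤ) ∈ Set.Icc (-c) (((m + 1 : ℕ) : ℤ) - 1 - c) := by
        rw [h]
        have hcb : 0 ≤ c := by positivity
        constructor <;> push_cast <;> omega
      simp only [Set.mem_Icc] at h1 h2
      have : c = (s : ℤ) := by omega
      have hv : (σ ⟨0, hn⟩ : ℕ) = s := by omega
      exact Fin.ext hv
    · intro h
      rw [hc, h]
  have hset : {σ : Equiv.Perm (Fin (m + 1)) |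
      Set.range (fun i : Fin (m + 1) => ((σ i : ℤ) - (σ ⟨0, hn⟩ : ℤ))) =
        Set.Icc (-(s : ℤ)) (((m + 1 : ℕ) : ℤ) - 1 - s)} =
      {σ : Equiv.Perm (Fin (m + 1)) | σ 0 = ⟨s, hs'⟩} := by
    ext σ
    rw [Set.mem_setOf_eq, Set.mem_setOf_eq, key σ]
    rfl
  rw [hset, card_perm_eval_eq]
  simp
end

section
/- Let n ≥ 3 and suppose p, q are distinct integers such that some permutation π of {1,...,n} has {D(π)_i : 1 ≤ i ≤ n−1} = {p, q}. Then p and q have opposite signs and gcd(p, q) = 1. -/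
/-!
The steps `π (i + 1) - π i` telescope to `π n - π 1`, which a self-map of `{1, …, n}` keeps within
`n - 1` in absolute value. If both step values had the same sign, all `n - 1` steps would be at
least `1` in absolute value and one of them at least `2`, overshooting this bound; so `p` and `q`
have opposite signs. Every common divisor of `p` and `q` divides every step, hence every
difference `π j - π i`, in particular the difference `2 - 1` between the preimages of `2` and `1`.
-/

open Set

/-- The value set of the derivative `D(π) = (π 2 - π 1, …, π n - π (n - 1))`. -/
def diffSet (π : ℕ → ℤ) (n : ℕ) : Set ℤ :=
  {d : ℤ | ∃ i : ℕ, 1 ≤ i ∧ i < n ∧ d = π (i + 1) - π i}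

section diffSet

variable {π : ℕ → ℤ} {n : ℕ}

theorem mem_diffSet {d : ℤ} : d ∈ diffSet π n ↔ ∃ i ∈ Finset.Ico 1 n, d = π (i + 1) - π i := by
  simp only [diffSet, mem_ofPred_eq, Finset.mem_Ico, and_assoc]

theorem diffSet_neg : diffSet (-π) n = -diffSet π n := by
  ext d
  simp only [diffSet, mem_neg, mem_ofPred_eq, Pi.neg_apply]
  constructor <;> rintro ⟨i, hi1, hin, hd⟩ <;> exact ⟨i, hi1, hin, by omega⟩

theorem diffSet_subset_one (hle : π n - π 1 ≤ n - 1) (hpos : ∀ d ∈ diffSet π n, 0 < d) :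
    diffSet π n ⊆ {1} := by
  rintro d hd
  by_contra hd1
  obtain ⟨i₀, hi₀, rfl⟩ := mem_diffSet.mp hd
  have hn : 1 ≤ n := by grind
  have hstep : ∀ i ∈ Finset.Ico 1 n, (1 : ℤ) ≤ π (i + 1) - π i := fun i hi =>
    hpos _ (mem_diffSet.mpr ⟨i, hi, rfl⟩)
  have hlt := Finset.sum_lt_sum hstep ⟨i₀, hi₀, by grind⟩
  rw [Finset.sum_Ico_sub π hn] at hlt
  simp only [Finset.sum_const, Nat.card_Ico, nsmul_eq_mul, mul_one] at hlt
  omega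

theorem zero_notMem_diffSet (hπ : InjOn π (Icc 1 n)) : 0 ∉ diffSet π n := by
  rintro ⟨i, hi1, hin, hzero⟩
  have := hπ (x₁ := i + 1) (x₂ := i) ⟨by omega, hin⟩ ⟨hi1, hin.le⟩ (by omega)
  omega

theorem abs_sub_le_of_mapsTo (hπ : MapsTo π (Icc 1 n) (Icc 1 (n : ℤ))) (hn : 1 ≤ n) :
    |π n - π 1| ≤ n - 1 := by
  have h1 := hπ ⟨le_rfl, hn⟩
  have hn' := hπ ⟨hn, le_rfl⟩
  simp only [mem_Icc] at h1 hn'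
  rw [abs_le]
  omega

theorem mul_neg_of_diffSet_eq_pair {p q : ℤ} (hrange : |π n - π 1| ≤ n - 1)
    (h0 : 0 ∉ diffSet π n) (hD : diffSet π n = {p, q}) (hpq : p ≠ q) : p * q < 0 := by
  have hp0 : p ≠ 0 := by rintro rfl; simp [hD] at h0
  have hq0 : q ≠ 0 := by rintro rfl; simp [hD] at h0
  by_contra! hmul
  rcases pos_and_pos_or_neg_and_neg_of_mul_pos
    (lt_of_le_of_ne hmul (mul_ne_zero hp0 hq0).symm) with ⟨hp, hq⟩ | ⟨hp, hq⟩
  · have hsub := diffSet_subset_one (abs_le.mp hrange).2 (by simp [hD, hp, hq])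
    simp only [hD, insert_subset_iff, singleton_subset_iff, mem_singleton_iff] at hsub
    exact hpq (hsub.1.trans hsub.2.symm)
  · have hD' : diffSet (-π) n = {-p, -q} := by
      rw [diffSet_neg, hD, neg_insert, neg_singleton]
    have hle : (-π) n - (-π) 1 ≤ n - 1 := by
      simp only [Pi.neg_apply]
      linarith [(abs_le.mp hrange).1]
    have hsub := diffSet_subset_one hle (by simp [hD', hp, hq])
    simp only [hD', insert_subset_iff, singleton_subset_iff, mem_singleton_iff] at hsub
    omega

theorem dvd_sub_one_of_dvd_diffSet {g : ℤ} (hg : ∀ d ∈ diffSet π n, g ∣ d) {j : ℕ}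
    (hj : j ∈ Icc 1 n) : g ∣ π j - π 1 := by
  rw [← Finset.sum_Ico_sub π hj.1]
  refine Finset.dvd_sum fun i hi => hg _ (mem_diffSet.mpr ⟨i, ?_, rfl⟩)
  grind

theorem dvd_one_of_dvd_diffSet (hπ : SurjOn π (Icc 1 n) (Icc 1 (n : ℤ))) (hn : 2 ≤ n) {g : ℤ}
    (hg : ∀ d ∈ diffSet π n, g ∣ d) : g ∣ 1 := by
  obtain ⟨a, ha, hπa⟩ := hπ (show (1 : ℤ) ∈ Icc 1 (n : ℤ) from ⟨le_rfl, by omega⟩)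
  obtain ⟨b, hb, hπb⟩ := hπ (show (2 : ℤ) ∈ Icc 1 (n : ℤ) from ⟨by omega, by omega⟩)
  have hdiff := dvd_sub (dvd_sub_one_of_dvd_diffSet hg hb) (dvd_sub_one_of_dvd_diffSet hg ha)
  rwa [sub_sub_sub_cancel_right, hπa, hπb] at hdiff

end diffSet

theorem D_pair_opposite_signs_coprime_general (n : ℕ) (p q : ℤ) (hpq : p ≠ q)
    (π : ℕ → ℤ) (hπ : Set.BijOn π (Set.Icc 1 n) (Set.Icc 1 (n : ℤ)))
    (hD : {d : ℤ | ∃ i : ℕ, 1 ≤ i ∧ i < n ∧ d = π (i + 1) - π i} = {p, q}) :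
    p * q < 0 ∧ Int.gcd p q = 1 := by
  change diffSet π n = {p, q} at hD
  have hn : 2 ≤ n := by
    obtain ⟨i, hi1, hin, -⟩ : p ∈ diffSet π n := by simp [hD]
    omega
  refine ⟨mul_neg_of_diffSet_eq_pair (abs_sub_le_of_mapsTo hπ.mapsTo (by omega))
    (zero_notMem_diffSet hπ.injOn) hD hpq, Int.gcd_eq_one_iff.mpr fun c hcp hcq => ?_⟩
  refine dvd_one_of_dvd_diffSet hπ.surjOn hn fun d hd => ?_
  rcases (show d ∈ ({p, q} : Set ℤ) from hD ▸ hd) with rfl | rfl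
  exacts [hcp, hcq]

/-- If n ≥ 3 and the set of derivative values of a permutation of {1,...,n} is exactly {p,q}
with p ≠ q, then p and q have opposite signs and are relatively prime. -/
theorem D_pair_opposite_signs_coprime (n : ℕ) (hn : 3 ≤ n) (p q : ℤ) (hpq : p ≠ q)
    (π : ℕ → ℤ) (hπ : Set.BijOn π (Set.Icc 1 n) (Set.Icc 1 (n : ℤ)))
    (hD : {d : ℤ | ∃ i : ℕ, 1 ≤ i ∧ i < n ∧ d = π (i + 1) - π i} = {p, q}) :
    p * q < 0 ∧ Int.gcd p q = 1 :=
  D_pair_opposite_signs_coprime_general n p q hpq π hπ hD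
end

section
/- Let a and b be relatively prime integers with 1 ≤ a < b. Then there exists an integer n and a permutation π of {1,...,n} such that the set of values of the discrete derivative of π is exactly {a, −b}. In particular, for a ≥ 2 one can take n = a + b and π_i ≡ 1 + (i−1)a (mod a+b) with π_i ∈ {1,...,n}, and for a = 1 one can take n = b+1 and π = (2,3,...,b+1,1). -/
/-!
Take `n = a + b` and `π i = (i * a mod n) + 1`. Since `a` is a unit modulo `n`, `π` permutes
`{1, …, n}`. Each step adds `a` modulo `n`, so it either adds `a` or, on wrapping around,
subtracts `n - a = b`. Both occur: `π 1 = a + 1 ↦ π 2 = 2a + 1` because `2a < n`, and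
`π (n - 1) = b + 1 ↦ π n = 1`.
-/

namespace Nat

theorem injOn_mul_mod_Icc {a n : ℕ} (h : Coprime a n) :
    Set.InjOn (fun i => i * a % n) (Set.Icc 1 n) := by
  intro i hi j hj hij
  have hmod : i ≡ j [MOD n] := ModEq.cancel_right_of_coprime h.symm hij
  have hzero : (j : ℤ) - i = 0 :=
    Int.eq_zero_of_abs_lt_dvd hmod.dvd
      (by rw [abs_lt]; simp only [Set.mem_Icc] at hi hj; omega)
  omega

theorem bijOn_mul_mod_Icc {a n : ℕ} (h : Coprime a n) :
    Set.BijOn (fun i => i * a % n) (Set.Icc 1 n) (Set.Iio n) := by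
  have hmaps : Set.MapsTo (fun i => i * a % n) (Set.Icc 1 n) (Set.Iio n) :=
    fun i hi => mod_lt _ (by simp only [Set.mem_Icc] at hi; omega)
  refine ⟨hmaps, injOn_mul_mod_Icc h, ?_⟩
  rw [← Finset.coe_Icc, ← Finset.coe_Iio] at hmaps ⊢
  exact Finset.surjOn_of_injOn_of_card_le _ hmaps (by simpa using injOn_mul_mod_Icc h)
    (by simp)

theorem add_mod_sub_mod_of_lt {a n : ℕ} (x : ℕ) (ha : a < n) :
    (((x + a) % n : ℕ) : ℤ) - (x % n : ℕ) = a ∨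
      (((x + a) % n : ℕ) : ℤ) - (x % n : ℕ) = a - n := by
  rw [add_mod_eq_ite, mod_eq_of_lt ha]
  split_ifs with hwrap
  · right; push_cast [hwrap]; ring
  · left; push_cast; ring

end Nat

/- A cyclic shift of the paper's `π i ≡ 1 + (i - 1) a`: starting at `a + 1` instead of `1`
puts the value `1` last, so that the single formula also covers `a = 1`. -/
def mulModSucc (a n i : ℕ) : ℤ := (i * a % n : ℕ) + 1

theorem bijOn_mulModSucc {a n : ℕ} (h : Nat.Coprime a n) :
    Set.BijOn (mulModSucc a n) (Set.Icc 1 n) (Set.Icc 1 (n : ℤ)) := by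
  have hshift : Set.BijOn (fun r : ℕ => (r : ℤ) + 1) (Set.Iio n) (Set.Icc 1 (n : ℤ)) := by
    refine ⟨fun r hr => ?_, fun r _ s _ hrs => by simpa using hrs, fun m hm => ?_⟩
    · simp only [Set.mem_Iio, Set.mem_Icc] at hr ⊢; omega
    · simp only [Set.mem_Icc] at hm
      exact ⟨(m - 1).toNat, by simp only [Set.mem_Iio]; omega, by simp only; omega⟩
  exact hshift.comp (Nat.bijOn_mul_mod_Icc h)

theorem mulModSucc_succ_sub {a n : ℕ} (ha : a < n) (i : ℕ) :
    mulModSucc a n (i + 1) - mulModSucc a n i = a ∨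
      mulModSucc a n (i + 1) - mulModSucc a n i = a - n := by
  simpa only [mulModSucc, add_one_mul, add_sub_add_right_eq_sub] using
    Nat.add_mod_sub_mod_of_lt (i * a) ha

theorem mulModSucc_two_sub_one {a n : ℕ} (h : 2 * a < n) :
    mulModSucc a n 2 - mulModSucc a n 1 = a := by
  simp only [mulModSucc, one_mul, Nat.mod_eq_of_lt h, Nat.mod_eq_of_lt (show a < n by omega)]
  push_cast
  ring

theorem mulModSucc_last_sub {a b : ℕ} (ha : 1 ≤ a) :
    mulModSucc a (a + b) (a + b) - mulModSucc a (a + b) (a + b - 1) = -b := by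
  have hprev : (a + b - 1) * a % (a + b) = b := by
    obtain ⟨c, rfl⟩ : ∃ c, a = c + 1 := ⟨a - 1, by omega⟩
    rw [show (c + 1 + b - 1) * (c + 1) = b + (c + 1 + b) * c by
        rw [show c + 1 + b - 1 = c + b by omega]; ring,
      Nat.add_mul_mod_self_left, Nat.mod_eq_of_lt (by omega)]
  simp only [mulModSucc, Nat.mul_mod_right, hprev]
  ring

/-- For relatively prime integers 1 ≤ a < b there exist n and a permutation of {1,...,n}
whose set of discrete derivative values is exactly {a, -b}. -/
theorem D_pair_realization (a b : ℕ) (ha : 1 ≤ a) (hab : a < b) (hco : Nat.Coprime a b) :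
    ∃ (n : ℕ) (π : ℕ → ℤ), Set.BijOn π (Set.Icc 1 n) (Set.Icc 1 (n : ℤ)) ∧
      {d : ℤ | ∃ i : ℕ, 1 ≤ i ∧ i < n ∧ d = π (i + 1) - π i} = {(a : ℤ), -(b : ℤ)} := by
  refine ⟨a + b, mulModSucc a (a + b),
    bijOn_mulModSucc (Nat.coprime_self_add_right.mpr hco), ?_⟩
  ext d
  simp only [Set.mem_ofPred_eq, Set.mem_insert_iff, Set.mem_singleton_iff]
  constructor
  · rintro ⟨i, -, -, rfl⟩
    rcases mulModSucc_succ_sub (show a < a + b by omega) i with h | h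
    · exact Or.inl h
    · right; rw [h]; push_cast; ring
  · rintro (rfl | rfl)
    · exact ⟨1, le_rfl, by omega, (mulModSucc_two_sub_one (by omega)).symm⟩
    · refine ⟨a + b - 1, by omega, by omega, ?_⟩
      rw [Nat.sub_add_cancel (by omega), mulModSucc_last_sub ha]
end

section
/- If π is a permutation of {1,...,n} with n ≥ 2 whose discrete derivative entries π₂−π₁, ..., πₙ−πₙ₋₁ are pairwise distinct, then δ(π) = max_i |π_{i+1}−π_i| ≥ ⌈n/2⌉. -/
/-- A 1-Costas permutation (distinct first-order differences) has local variation at least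
⌈n/2⌉. -/
theorem one_costas_local_variation_lb (n : ℕ) (hn : 2 ≤ n) (π : ℕ → ℤ)
    (hπ : Set.BijOn π (Set.Icc 1 n) (Set.Icc 1 (n : ℤ)))
    (hdist : ∀ i j : ℕ, 1 ≤ i → i < n → 1 ≤ j → j < n →
      π (i + 1) - π i = π (j + 1) - π j → i = j) :
    ∃ i : ℕ, 1 ≤ i ∧ i < n ∧ (((n + 1) / 2 : ℕ) : ℤ) ≤ |π (i + 1) - π i| := by
  by_contra hcon
  push_neg at hcon
  set m : ℕ := (n + 1) / 2 - 1 with hm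
  have hmk : ((n + 1) / 2 : ℕ) = m + 1 := by omega
  have hbound : ∀ i, 1 ≤ i → i < n → |π (i + 1) - π i| ≤ (m : ℤ) := by
    intro i h1 h2
    have h := hcon i h1 h2
    rw [hmk] at h
    push_cast at h
    omega
  have hinj : Set.InjOn π (Set.Icc 1 n) := hπ.injOn
  have hne : ∀ i, 1 ≤ i → i < n → π (i + 1) - π i ≠ 0 := by
    intro i h1 h2 h0
    have heq : π (i + 1) = π i := by linarith
    have := hinj (Set.mem_Icc.mpr ⟨by omega, by omega⟩)
      (Set.mem_Icc.mpr ⟨h1, by omega⟩) heq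
    omega
  set f : ℕ → ℤ := fun i => π (i + 1) - π i with hf
  set T : Finset ℤ := (Finset.Icc (-(m : ℤ)) m).erase 0 with hT
  have hTcard : T.card = 2 * m := by
    rw [hT, Finset.card_erase_of_mem (by simp), Int.card_Icc]
    have : ((m : ℤ) - -(m : ℤ) + 1).toNat = 2 * m + 1 := by omega
    omega
  have hsub : ∀ i ∈ Finset.Ico 1 n, f i ∈ T := by
    intro i hi
    simp only [Finset.mem_Ico] at hi
    rw [hT, Finset.mem_erase, Finset.mem_Icc]
    exact ⟨hne i hi.1 hi.2, abs_le.mp (hbound i hi.1 hi.2)⟩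
  have hfinj : ∀ i ∈ Finset.Ico 1 n, ∀ j ∈ Finset.Ico 1 n, f i = f j → i = j := by
    intro i hi j hj h
    simp only [Finset.mem_Ico] at hi hj
    exact hdist i j hi.1 hi.2 hj.1 hj.2 h
  have himg : Finset.image f (Finset.Ico 1 n) = T := by
    apply Finset.eq_of_subset_of_card_le
    · intro x hx
      rw [Finset.mem_image] at hx
      obtain ⟨i, hi, rfl⟩ := hx
      exact hsub i hi
    · rw [hTcard, Finset.card_image_of_injOn hfinj, Nat.card_Ico]
      omega
  have hsum0 : ∑ x ∈ T, x = 0 := by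
    refine Finset.sum_involution (fun a _ => -a) (fun a ha => by ring)
      (fun a ha h0 => ?_) (fun a ha => ?_) (fun a ha => by ring)
    · show -a ≠ a
      rw [hT, Finset.mem_erase] at ha
      omega
    · show -a ∈ T
      rw [hT, Finset.mem_erase, Finset.mem_Icc] at ha ⊢
      omega
  have hsumf : ∑ i ∈ Finset.Ico 1 n, f i = 0 := by
    have := Finset.sum_image (g := f) (f := fun x : ℤ => x) hfinj
    rw [himg] at this
    rw [← this, hsum0]
  have htel : ∑ i ∈ Finset.Ico 1 n, f i = π n - π 1 := by
    rw [Finset.sum_Ico_eq_sum_range]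
    have h := Finset.sum_range_sub (fun j => π (j + 1)) (n - 1)
    have hn1 : n - 1 + 1 = n := by omega
    simp only [hn1] at h
    rw [← h]
    apply Finset.sum_congr rfl
    intro i _
    simp only [hf]
    have h1 : 1 + i = i + 1 := by omega
    rw [h1]
  have hπeq : π n = π 1 := by
    have : π n - π 1 = 0 := by rw [← htel, hsumf]
    linarith
  have := hinj (Set.mem_Icc.mpr ⟨by omega, le_refl n⟩)
    (Set.mem_Icc.mpr ⟨le_refl 1, by omega⟩) hπeq
  omega
end

section
/- Let n be even. Then the maximum of Δ(π) over permutations π of {1,...,n} equals (n²−2)/2, and Δ(π) attains this maximum if and only if π is mid-alternating and {π₁, πₙ} = {n/2, n/2+1}. -/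
/-- Distance of `v` from the "middle" `{k, k+1}` of `{1, ..., 2k}`. -/
def mg (k : ℕ) (v : ℤ) : ℤ := if v ≤ (k:ℤ) then (k:ℤ) - v else v - ((k:ℤ)+1)

lemma mg_nonneg (k : ℕ) (v : ℤ) : 0 ≤ mg k v := by unfold mg; split_ifs <;> omega

lemma abs_le_mg (k : ℕ) (a b : ℤ) : |a - b| ≤ mg k a + mg k b + 1 := by
  rcases abs_cases (a - b) with ⟨h1, h2⟩ | ⟨h1, h2⟩ <;> unfold mg <;> split_ifs <;> omega

lemma abs_eq_mg_iff (k : ℕ) (a b : ℤ) :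
    |a - b| = mg k a + mg k b + 1 ↔
      ((a ≤ (k:ℤ) ∧ (k:ℤ) + 1 ≤ b) ∨ (b ≤ (k:ℤ) ∧ (k:ℤ) + 1 ≤ a)) := by
  rcases abs_cases (a - b) with ⟨h1, h2⟩ | ⟨h1, h2⟩ <;> rw [h1] <;> unfold mg <;>
    split_ifs <;> omega

lemma mg_eq_zero (k : ℕ) (v : ℤ) : mg k v = 0 ↔ (v = (k:ℤ) ∨ v = (k:ℤ) + 1) := by
  unfold mg; split_ifs <;> omega

lemma int_sum_id (m : ℕ) : (∑ v ∈ Finset.Icc (1:ℤ) (m:ℤ), v) * 2 = m * (m+1) := by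
  induction m with
  | zero => simp
  | succ m ih =>
    have h : Finset.Icc (1:ℤ) ((m+1 : ℕ):ℤ) = insert ((m:ℤ)+1) (Finset.Icc (1:ℤ) (m:ℤ)) := by
      ext x; simp only [Finset.mem_Icc, Finset.mem_insert]; push_cast; omega
    have h2 : ((m:ℤ)+1) ∉ Finset.Icc (1:ℤ) (m:ℤ) := by simp
    rw [h, Finset.sum_insert h2]
    push_cast
    push_cast at ih
    ring_nf
    ring_nf at ih
    linarith

lemma sum_mg (k : ℕ) : ∑ v ∈ Finset.Icc (1:ℤ) ((2*k:ℕ):ℤ), mg k v = (k:ℤ)^2 - k := by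
  rw [← Finset.sum_filter_add_sum_filter_not (Finset.Icc (1:ℤ) ((2*k:ℕ):ℤ)) (· ≤ (k:ℤ))]
  have e1 : (Finset.Icc (1:ℤ) ((2*k:ℕ):ℤ)).filter (· ≤ (k:ℤ)) = Finset.Icc (1:ℤ) (k:ℤ) := by
    ext x; simp only [Finset.mem_filter, Finset.mem_Icc]; push_cast; omega
  have e2 : (Finset.Icc (1:ℤ) ((2*k:ℕ):ℤ)).filter (¬ · ≤ (k:ℤ)) = Finset.Icc ((k:ℤ)+1) (2*k:ℤ) := by
    ext x; simp only [Finset.mem_filter, Finset.mem_Icc]; push_cast; omega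
  rw [e1, e2]
  have c1 : ∑ v ∈ Finset.Icc (1:ℤ) (k:ℤ), mg k v = ∑ v ∈ Finset.Icc (1:ℤ) (k:ℤ), ((k:ℤ) - v) := by
    refine Finset.sum_congr rfl fun v hv => ?_
    rw [Finset.mem_Icc] at hv; unfold mg; rw [if_pos hv.2]
  have c2 : ∑ v ∈ Finset.Icc ((k:ℤ)+1) (2*k:ℤ), mg k v
      = ∑ v ∈ Finset.Icc ((k:ℤ)+1) (2*k:ℤ), (v - ((k:ℤ)+1)) := by
    refine Finset.sum_congr rfl fun v hv => ?_
    rw [Finset.mem_Icc] at hv; unfold mg; rw [if_neg (by omega)]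
  rw [c1, c2, Finset.sum_sub_distrib, Finset.sum_sub_distrib, Finset.sum_const, Finset.sum_const,
    Int.card_Icc, Int.card_Icc]
  have g1 := int_sum_id k
  have g2 := int_sum_id (2*k)
  have t1 : ((k:ℤ) + 1 - 1).toNat = k := by omega
  have t2 : ((2*(k:ℤ)) + 1 - ((k:ℤ)+1)).toNat = k := by omega
  have e3 : ∑ v ∈ Finset.Icc ((k:ℤ)+1) (2*k:ℤ), v
      = ∑ v ∈ Finset.Icc (1:ℤ) ((2*k:ℕ):ℤ), v - ∑ v ∈ Finset.Icc (1:ℤ) (k:ℤ), v := by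
    rw [← Finset.sum_filter_add_sum_filter_not (Finset.Icc (1:ℤ) ((2*k:ℕ):ℤ)) (· ≤ (k:ℤ)), e1, e2]
    ring
  push_cast at g2 e3 ⊢
  rw [t1, t2, e3]
  simp only [nsmul_eq_mul]
  nlinarith [g1, g2]

lemma sum_reindex (n : ℕ) (π : ℕ → ℤ) (hb : Set.BijOn π (Set.Icc 1 n) (Set.Icc 1 (n:ℤ)))
    (f : ℤ → ℤ) :
    ∑ i ∈ Finset.Icc 1 n, f (π i) = ∑ v ∈ Finset.Icc (1:ℤ) (n:ℤ), f v := by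
  refine Finset.sum_bij (fun a _ => π a) ?_ ?_ ?_ (fun a ha => rfl)
  · intro a ha
    rw [Finset.mem_Icc] at ha
    have := hb.mapsTo (by rw [Set.mem_Icc]; exact ha)
    rw [Set.mem_Icc] at this
    exact Finset.mem_Icc.mpr this
  · intro a ha b hbm h
    rw [Finset.mem_Icc] at ha hbm
    exact hb.injOn (by rw [Set.mem_Icc]; exact ha) (by rw [Set.mem_Icc]; exact hbm) h
  · intro v hv
    rw [Finset.mem_Icc] at hv
    obtain ⟨a, ha, rfl⟩ := hb.surjOn (by rw [Set.mem_Icc]; exact hv)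
    rw [Set.mem_Icc] at ha
    exact ⟨a, Finset.mem_Icc.mpr ha, rfl⟩

lemma shift_sum (n : ℕ) (h : ℕ → ℤ) (hn : 2 ≤ n) :
    ∑ i ∈ Finset.Ico 1 n, h (i+1) = ∑ i ∈ Finset.Icc 2 n, h i := by
  rw [← Finset.Ico_add_one_right_eq_Icc, Finset.sum_Ico_eq_sum_range, Finset.sum_Ico_eq_sum_range]
  have : n + 1 - 2 = n - 1 := by omega
  rw [this]
  exact Finset.sum_congr rfl fun j _ => by rw [show 1 + j + 1 = 2 + j by omega]

lemma rhs_sum (k : ℕ) (hk : 1 ≤ k) (π : ℕ → ℤ)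
    (hb : Set.BijOn π (Set.Icc 1 (2*k)) (Set.Icc 1 ((2*k:ℕ):ℤ))) :
    ∑ i ∈ Finset.Ico 1 (2*k), (mg k (π i) + mg k (π (i+1)) + 1)
      = 2*(k:ℤ)^2 - 1 - mg k (π 1) - mg k (π (2*k)) := by
  have hS : ∑ i ∈ Finset.Icc 1 (2*k), mg k (π i) = (k:ℤ)^2 - k :=
    (sum_reindex (2*k) π hb (mg k)).trans (sum_mg k)
  have h1 : ∑ i ∈ Finset.Ico 1 (2*k), mg k (π i)
      = ((k:ℤ)^2 - k) - mg k (π (2*k)) := by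
    rw [← hS, ← Finset.Icc_erase_right,
      Finset.sum_erase_eq_sub (Finset.mem_Icc.mpr ⟨by omega, le_refl _⟩)]
  have h2 : ∑ i ∈ Finset.Ico 1 (2*k), mg k (π (i+1))
      = ((k:ℤ)^2 - k) - mg k (π 1) := by
    rw [shift_sum (2*k) (fun i => mg k (π i)) (by omega)]
    rw [show (2:ℕ) = 1 + 1 from rfl, Finset.Icc_add_one_left_eq_Ioc, ← Finset.Icc_erase_left]
    rw [Finset.sum_erase_eq_sub (Finset.mem_Icc.mpr ⟨le_refl _, by omega⟩), hS]
  rw [Finset.sum_add_distrib, Finset.sum_add_distrib, h1, h2, Finset.sum_const,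
    Nat.card_Ico, nsmul_eq_mul]
  have : ((2*k - 1 : ℕ) : ℤ) = 2*(k:ℤ) - 1 := by omega
  rw [this]; ring

lemma char (k : ℕ) (hk : 1 ≤ k) (π : ℕ → ℤ)
    (hb : Set.BijOn π (Set.Icc 1 (2*k)) (Set.Icc 1 ((2*k:ℕ):ℤ))) :
    (∑ i ∈ Finset.Ico 1 (2*k), |π (i+1) - π i|) ≤ 2*(k:ℤ)^2 - 1 ∧
    ((∑ i ∈ Finset.Ico 1 (2*k), |π (i+1) - π i|) = 2*(k:ℤ)^2 - 1 ↔
      ((∀ i : ℕ, 1 ≤ i → i < 2*k →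
          ((π i ≤ (k:ℤ) ∧ (k:ℤ) + 1 ≤ π (i+1)) ∨ ((k:ℤ) + 1 ≤ π i ∧ π (i+1) ≤ (k:ℤ)))) ∧
        ({π 1, π (2*k)} : Set ℤ) = {(k:ℤ), (k:ℤ) + 1})) := by
  have hE := rhs_sum k hk π hb
  have hterm : ∀ i ∈ Finset.Ico 1 (2*k), |π (i+1) - π i| ≤ mg k (π i) + mg k (π (i+1)) + 1 := by
    intro i _
    calc |π (i+1) - π i| = |π i - π (i+1)| := abs_sub_comm _ _
    _ ≤ _ := abs_le_mg k _ _
  have hle : (∑ i ∈ Finset.Ico 1 (2*k), |π (i+1) - π i|)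
      ≤ 2*(k:ℤ)^2 - 1 - mg k (π 1) - mg k (π (2*k)) := by
    rw [← hE]; exact Finset.sum_le_sum hterm
  have hm1 := mg_nonneg k (π 1)
  have hmn := mg_nonneg k (π (2*k))
  refine ⟨by linarith, ?_, ?_⟩
  · intro h
    have h1 : mg k (π 1) = 0 := by linarith
    have h2 : mg k (π (2*k)) = 0 := by linarith
    have heq : (∑ i ∈ Finset.Ico 1 (2*k), |π (i+1) - π i|)
        = ∑ i ∈ Finset.Ico 1 (2*k), (mg k (π i) + mg k (π (i+1)) + 1) := by
      rw [hE]; linarith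
    have hall := (Finset.sum_eq_sum_iff_of_le hterm).mp heq
    constructor
    · intro i hi1 hi2
      have := hall i (Finset.mem_Ico.mpr ⟨hi1, hi2⟩)
      rw [abs_sub_comm, abs_eq_mg_iff] at this
      tauto
    · have e1 := (mg_eq_zero k _).mp h1
      have e2 := (mg_eq_zero k _).mp h2
      have hne : π 1 ≠ π (2*k) := by
        intro he
        have h1m : (1:ℕ) ∈ Set.Icc 1 (2*k) := Set.mem_Icc.mpr ⟨le_refl _, by omega⟩
        have h2m : (2*k) ∈ Set.Icc 1 (2*k) := Set.mem_Icc.mpr ⟨by omega, le_refl _⟩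
        have := hb.injOn h1m h2m he
        omega
      rcases e1 with e1 | e1 <;> rcases e2 with e2 | e2
      · exact absurd (e1.trans e2.symm) hne
      · rw [e1, e2]
      · rw [e1, e2]; exact Set.pair_comm _ _
      · exact absurd (e1.trans e2.symm) hne
  · rintro ⟨halt, hset⟩
    have h1 : π 1 ∈ ({(k:ℤ), (k:ℤ)+1} : Set ℤ) := hset ▸ Set.mem_insert _ _
    have h2 : π (2*k) ∈ ({(k:ℤ), (k:ℤ)+1} : Set ℤ) := hset ▸ Set.mem_insert_of_mem _ rfl
    have hm1' : mg k (π 1) = 0 := (mg_eq_zero k _).mpr (by simpa using h1)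
    have hm2' : mg k (π (2*k)) = 0 := (mg_eq_zero k _).mpr (by simpa using h2)
    have heq : (∑ i ∈ Finset.Ico 1 (2*k), |π (i+1) - π i|)
        = ∑ i ∈ Finset.Ico 1 (2*k), (mg k (π i) + mg k (π (i+1)) + 1) := by
      refine Finset.sum_congr rfl fun i hi => ?_
      rw [Finset.mem_Ico] at hi
      rw [abs_sub_comm, abs_eq_mg_iff]
      have := halt i hi.1 hi.2
      tauto
    rw [heq, hE, hm1', hm2']; ring

/-- Explicit optimal permutation: k, 2k, k-1, 2k-1, ..., 1, k+1. -/
def pie (k i : ℕ) : ℤ :=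
  if i % 2 = 1 then (k:ℤ) + 1 - ((i+1)/2 : ℕ) else 2*(k:ℤ) + 1 - ((i/2 : ℕ):ℤ)

lemma pie_bij (k : ℕ) (hk : 1 ≤ k) :
    Set.BijOn (pie k) (Set.Icc 1 (2*k)) (Set.Icc 1 ((2*k:ℕ):ℤ)) := by
  refine ⟨?_, ?_, ?_⟩
  · intro i hi
    rw [Set.mem_Icc] at hi
    rw [Set.mem_Icc]
    unfold pie; split_ifs <;> constructor <;> push_cast <;> omega
  · intro a ha b hbm h
    rw [Set.mem_Icc] at ha hbm
    unfold pie at h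
    split_ifs at h <;> push_cast at h <;> omega
  · intro v hv
    rw [Set.mem_Icc] at hv
    simp only [Set.mem_image, Set.mem_Icc]
    by_cases hv2 : v ≤ (k:ℤ)
    · refine ⟨2*k + 1 - 2*v.toNat, ⟨by omega, by omega⟩, ?_⟩
      unfold pie
      rw [if_pos (by omega)]
      push_cast
      omega
    · refine ⟨2*(2*k + 1) - 2*v.toNat, ⟨by omega, by omega⟩, ?_⟩
      unfold pie
      rw [if_neg (by omega)]
      push_cast
      omega

lemma pie_one (k : ℕ) : pie k 1 = (k:ℤ) := by unfold pie; norm_num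

lemma pie_last (k : ℕ) (hk : 1 ≤ k) : pie k (2*k) = (k:ℤ) + 1 := by
  unfold pie
  rw [if_neg (by omega)]
  push_cast
  omega

lemma pie_alt (k : ℕ) (hk : 1 ≤ k) : ∀ i : ℕ, 1 ≤ i → i < 2*k →
    ((pie k i ≤ (k:ℤ) ∧ (k:ℤ) + 1 ≤ pie k (i+1)) ∨
     ((k:ℤ) + 1 ≤ pie k i ∧ pie k (i+1) ≤ (k:ℤ))) := by
  intro i h1 h2
  unfold pie
  rcases Nat.even_or_odd i with he | ho
  · have hp : i % 2 = 0 := Nat.even_iff.mp he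
    right
    rw [if_neg (by omega), if_pos (by omega)]
    constructor <;> omega
  · have hp : i % 2 = 1 := Nat.odd_iff.mp ho
    left
    rw [if_pos (by omega), if_neg (by omega)]
    constructor <;> omega

/-- For even n, the maximum global variation is (n²-2)/2, attained exactly at the
mid-alternating permutations with {π₁, πₙ} = {n/2, n/2+1}. -/
theorem max_global_variation_even (n : ℕ) (hn : 2 ≤ n) (hne : Even n) :
    IsGreatest {S : ℤ | ∃ π : ℕ → ℤ, Set.BijOn π (Set.Icc 1 n) (Set.Icc 1 (n : ℤ)) ∧
        S = ∑ i ∈ Finset.Ico 1 n, |π (i + 1) - π i|}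
      (((n ^ 2 - 2) / 2 : ℕ) : ℤ) ∧
    ∀ π : ℕ → ℤ, Set.BijOn π (Set.Icc 1 n) (Set.Icc 1 (n : ℤ)) →
      (∑ i ∈ Finset.Ico 1 n, |π (i + 1) - π i| = (((n ^ 2 - 2) / 2 : ℕ) : ℤ) ↔
        ((∀ i : ℕ, 1 ≤ i → i < n →
            ((π i ≤ ((n / 2 : ℕ) : ℤ) ∧ ((n / 2 : ℕ) : ℤ) + 1 ≤ π (i + 1)) ∨
             (((n / 2 : ℕ) : ℤ) + 1 ≤ π i ∧ π (i + 1) ≤ ((n / 2 : ℕ) : ℤ)))) ∧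
          ({π 1, π n} : Set ℤ) = {((n / 2 : ℕ) : ℤ), ((n / 2 : ℕ) : ℤ) + 1})) := by
  obtain ⟨k, rfl⟩ : ∃ k, n = 2 * k := ⟨n / 2, by have := Nat.even_iff.mp hne; omega⟩
  have hk : 1 ≤ k := by omega
  have hkk : 1 ≤ k * k := Nat.one_le_iff_ne_zero.mpr (by positivity)
  have hdiv : 2 * k / 2 = k := by omega
  have hsq : (2*k)^2 = 4*(k*k) := by ring
  have hC : ((2*k)^2 - 2) / 2 = 2*(k*k) - 1 := by rw [hsq]; omega
  have hC2 : (((2*k)^2 - 2) / 2 : ℕ) = (2*(k:ℤ)^2 - 1 : ℤ) := by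
    rw [hC, Nat.cast_sub (by omega : 1 ≤ 2*(k*k))]
    push_cast
    ring
  rw [hdiv, hC2]
  constructor
  · constructor
    · exact ⟨pie k, pie_bij k hk,
        ((char k hk (pie k) (pie_bij k hk)).2.mpr
          ⟨pie_alt k hk, by rw [pie_one, pie_last k hk]⟩).symm⟩
    · rintro S ⟨π, hbij, rfl⟩
      exact (char k hk π hbij).1
  · intro π hbij
    exact (char k hk π hbij).2
end

section
/- For n ≥ 2, the maximum over all permutations π of {1,...,n} of the minimum absolute value of the entries of the discrete derivative equals ⌊n/2⌋; that is, max_{π ∈ S_n} min_{1≤i≤n−1} |π_{i+1}−π_i| = ⌊n/2⌋. -/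
/-- max over permutations of the minimum absolute derivative entry equals ⌊n/2⌋. -/
theorem max_min_abs_derivative (n : ℕ) (hn : 2 ≤ n) :
    (∀ π : ℕ → ℤ, Set.BijOn π (Set.Icc 1 n) (Set.Icc 1 (n : ℤ)) →
      ∃ i : ℕ, 1 ≤ i ∧ i < n ∧ |π (i + 1) - π i| ≤ ((n / 2 : ℕ) : ℤ)) ∧
    (∃ π : ℕ → ℤ, Set.BijOn π (Set.Icc 1 n) (Set.Icc 1 (n : ℤ)) ∧
      ∀ i : ℕ, 1 ≤ i → i < n → ((n / 2 : ℕ) : ℤ) ≤ |π (i + 1) - π i|) := by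
  constructor
  · -- upper bound: look at the position of value ⌈n/2⌉ = n - n/2
    intro π hπ
    have hmem : ((n - n / 2 : ℕ) : ℤ) ∈ Set.Icc 1 (n : ℤ) := by
      simp only [Set.mem_Icc]; omega
    obtain ⟨p, hp, hval⟩ := hπ.surjOn hmem
    simp only [Set.mem_Icc] at hp
    by_cases hpn : p < n
    · have h2 : π (p + 1) ∈ Set.Icc 1 (n : ℤ) :=
        hπ.mapsTo (by simp only [Set.mem_Icc]; omega)
      simp only [Set.mem_Icc] at h2
      refine ⟨p, hp.1, hpn, ?_⟩
      rw [hval, abs_le]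
      constructor <;> omega
    · -- p = n, use i = n - 1
      have hpe : p = n := by omega
      have h2 : π (n - 1) ∈ Set.Icc 1 (n : ℤ) :=
        hπ.mapsTo (by simp only [Set.mem_Icc]; omega)
      simp only [Set.mem_Icc] at h2
      refine ⟨n - 1, by omega, by omega, ?_⟩
      have hx : n - 1 + 1 = n := by omega
      rw [hpe] at hval
      rw [hx, hval, abs_le]
      constructor <;> omega
  · -- construction: zigzag permutation
    refine ⟨fun i => if i % 2 = 1 then (((i + 1) / 2 + n / 2 : ℕ) : ℤ)
        else ((i / 2 : ℕ) : ℤ), ⟨?_, ?_, ?_⟩, ?_⟩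
    · -- MapsTo
      intro i hi
      simp only [Set.mem_Icc] at hi ⊢
      split_ifs with h <;> constructor <;> omega
    · -- InjOn
      intro a ha b hb hab
      simp only [Set.mem_Icc] at ha hb
      simp only [] at hab
      split_ifs at hab <;> omega
    · -- SurjOn
      intro y hy
      simp only [Set.mem_Icc] at hy
      by_cases hy2 : y ≤ ((n / 2 : ℕ) : ℤ)
      · refine ⟨2 * y.toNat, ?_, ?_⟩
        · simp only [Set.mem_Icc]; omega
        · simp only []
          rw [if_neg (by omega : ¬(2 * y.toNat) % 2 = 1)]
          omega
      · refine ⟨2 * (y.toNat - n / 2) - 1, ?_, ?_⟩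
        · simp only [Set.mem_Icc]; omega
        · simp only []
          rw [if_pos (by omega : (2 * (y.toNat - n / 2) - 1) % 2 = 1)]
          omega
    · -- all gaps are ≥ n/2
      intro i h1 hlt
      simp only
      split_ifs with ha hb hb
      · exfalso; omega
      · rw [le_abs]; left; omega
      · rw [le_abs]; right; omega
      · exfalso; omega
end
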